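/- arXiv:2604.13524 — 2 statements merged into one kernel-verified Lean document; each statement's English description precedes it below -/
import Mathlib

section
/- Let ε ∈ (0,1), let ρ be a density matrix on ℂ^d, and let X be a Hermitian d×d complex matrix with trace 1. Then the infimum of tr[EX] over all tests E (Hermitian with 0 ≤ E ≤ I) satisfying tr[(I−E)ρ] ≤ ε equals 1 − ε if and only if ρ = X. -/
open Matrix ComplexOrder

/-- Trace norm of a complex matrix: the trace of `sqrt(AᴴA)` (sum of singular values). -/
noncomputable def traceNorm {n : Type*} [Fintype n] [DecidableEq n]
    (A : Matrix n n ℂ) : ℝ :=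
  (((Matrix.posSemidef_conjTranspose_mul_self A).1.eigenvectorUnitary.1 *
      Matrix.diagonal (((↑) : ℝ → ℂ) ∘ Real.sqrt ∘
        (Matrix.posSemidef_conjTranspose_mul_self A).1.eigenvalues) *
      (star (Matrix.posSemidef_conjTranspose_mul_self A).1.eigenvectorUnitary :
        Matrix n n ℂ)).trace).re

/-- Trace distance `T(X,Y) = ‖X - Y‖₁ / 2`. -/
noncomputable def traceDist {n : Type*} [Fintype n] [DecidableEq n]
    (X Y : Matrix n n ℂ) : ℝ :=
  traceNorm (X - Y) / 2

/-- A density matrix: positive semidefinite with unit trace. -/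
def IsDensityMatrix {n : Type*} [Fintype n] (ρ : Matrix n n ℂ) : Prop :=
  ρ.PosSemidef ∧ ρ.trace = 1

/-- The battery Gibbs state `π_M = diag(1 - 1/M, 1/M)`. -/
noncomputable def piM (M : ℝ) : Matrix (Fin 2) (Fin 2) ℂ :=
  Matrix.diagonal ![((1 - 1/M : ℝ) : ℂ), ((1/M : ℝ) : ℂ)]

/-- The excited battery state `|1⟩⟨1| = diag(0,1)`. -/
def ket1 : Matrix (Fin 2) (Fin 2) ℂ :=
  Matrix.diagonal ![0, 1]

/-- A test (POVM effect): `0 ≤ E ≤ I`. -/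
def IsTest {n : Type*} [Fintype n] [DecidableEq n] (E : Matrix n n ℂ) : Prop :=
  E.PosSemidef ∧ (1 - E).PosSemidef

/-- Choi matrix `Σ_{ij} E_{ij} ⊗ F(E_{ij})` of a linear map on matrices. -/
noncomputable def choiMatrix {n m : Type*} [Fintype n] [DecidableEq n] [Fintype m]
    (F : Matrix n n ℂ →ₗ[ℂ] Matrix m m ℂ) :
    Matrix (n × m) (n × m) ℂ :=
  fun p q => F (Matrix.single p.1 q.1 1) p.2 q.2

/-- Completely positive (positive semidefinite Choi matrix) and trace preserving. -/
def IsCPTP {n m : Type*} [Fintype n] [DecidableEq n] [Fintype m]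
    (F : Matrix n n ℂ →ₗ[ℂ] Matrix m m ℂ) : Prop :=
  (choiMatrix F).PosSemidef ∧ ∀ X, (F X).trace = X.trace

/-- `n`-fold Kronecker (tensor) power of a `2 × 2` matrix, indexed by bit strings. -/
def tensPow (A : Matrix (Fin 2) (Fin 2) ℂ) (n : ℕ) :
    Matrix (Fin n → Fin 2) (Fin n → Fin 2) ℂ :=
  fun x y => ∏ i, A (x i) (y i)

/-- `ε`-ball (in trace distance) of density matrices around a set `𝓟`. -/
noncomputable def metBall {n : Type*} [Fintype n] [DecidableEq n]
    (ε : ℝ) (P : Set (Matrix n n ℂ)) : Set (Matrix n n ℂ) :=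
  {ω | IsDensityMatrix ω ∧ ∃ ρ ∈ P, traceDist ω ρ ≤ ε}

/-!
If `ρ = X`, every admissible test has `tr[Eρ] = 1 - tr[(1 - E)ρ] ≥ 1 - ε`, with equality for
`E = (1 - ε) I`. If `ρ ≠ X`, the traceless Hermitian matrix `ρ - X` has a positive eigenvalue,
so the projection `T` onto a corresponding eigenvector is a test with `tr[T(ρ - X)] > 0`.
Moving from `(1 - ε) I` to `E = a I + δ T` with `a = 1 - ε - δ tr[Tρ]` keeps `tr[(1 - E)ρ] = ε`
but lowers `tr[EX]` to `1 - ε - δ tr[T(ρ - X)] < 1 - ε`.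
-/

/-- Type-II errors `tr[EX]` of tests with type-I error `tr[(1 - E)ρ] ≤ ε`; the infimum is the
hypothesis-testing quantity `β_ε(ρ‖X)`. -/
def typeIIErrors {n : Type*} [Fintype n] [DecidableEq n] (ε : ℝ) (ρ X : Matrix n n ℂ) :
    Set ℝ :=
  {r | ∃ E, IsTest E ∧ ((1 - E) * ρ).trace.re ≤ ε ∧ r = (E * X).trace.re}

section

variable {n : Type*} [Fintype n] [DecidableEq n]

theorem Matrix.trace_unitary_conj_diagonal_mul (U : unitaryGroup n ℂ) (d : n → ℂ)
    (M : Matrix n n ℂ) :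
    ((U : Matrix n n ℂ) * diagonal d * star (U : Matrix n n ℂ) * M).trace =
      ∑ i, d i * (star (U : Matrix n n ℂ) * M * U) i i := by
  rw [Matrix.mul_assoc, Matrix.mul_assoc, trace_mul_comm, Matrix.mul_assoc]
  simp [trace, diagonal_mul]

theorem Matrix.PosSemidef.trace_mul_nonneg {A B : Matrix n n ℂ} (hA : A.PosSemidef)
    (hB : B.PosSemidef) : 0 ≤ (A * B).trace := by
  rw [hA.1.spectral_theorem, Unitary.conjStarAlgAut_apply, trace_unitary_conj_diagonal_mul]
  refine Finset.sum_nonneg fun i _ => mul_nonneg ?_ (hB.conjTranspose_mul_mul_same _).diag_nonneg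
  simpa using hA.eigenvalues_nonneg i

theorem Matrix.re_trace_one_sub_mul {ρ : Matrix n n ℂ} (hρ : ρ.trace = 1) (E : Matrix n n ℂ) :
    ((1 - E) * ρ).trace.re = 1 - (E * ρ).trace.re := by
  simp [Matrix.sub_mul, trace_sub, hρ]

theorem Matrix.re_trace_smul_one_add_smul_mul (a δ : ℝ) (T M : Matrix n n ℂ) :
    ((a • (1 : Matrix n n ℂ) + δ • T) * M).trace.re = a * M.trace.re + δ * (T * M).trace.re := by
  simp [Matrix.add_mul, trace_add]

theorem isTest_diagonal_single (i : n) : IsTest (diagonal (Pi.single i (1 : ℂ))) := by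
  refine ⟨posSemidef_diagonal_iff.mpr fun j => ?_, ?_⟩
  · by_cases h : j = i <;> simp [h]
  · rw [← diagonal_one, diagonal_sub]
    refine posSemidef_diagonal_iff.mpr fun j => ?_
    by_cases h : j = i <;> simp [h]

namespace IsTest

theorem unitary_conj {E : Matrix n n ℂ} (hE : IsTest E) (U : unitaryGroup n ℂ) :
    IsTest ((U : Matrix n n ℂ) * E * star (U : Matrix n n ℂ)) := by
  have hU : IsUnit (U : Matrix n n ℂ) := (Unitary.toUnits U).isUnit
  refine ⟨hU.posSemidef_star_right_conjugate_iff.mpr hE.1, ?_⟩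
  convert hU.posSemidef_star_right_conjugate_iff.mpr hE.2 using 1
  simp [Matrix.mul_sub, Matrix.sub_mul]

theorem smul_one_add_smul {T : Matrix n n ℂ} (hT : IsTest T) {a δ : ℝ} (ha : 0 ≤ a)
    (hδ : 0 ≤ δ) (h : a + δ ≤ 1) : IsTest (a • (1 : Matrix n n ℂ) + δ • T) := by
  refine ⟨(PosSemidef.one.smul ha).add (hT.1.smul hδ), ?_⟩
  rw [show 1 - (a • (1 : Matrix n n ℂ) + δ • T) = (1 - a - δ) • 1 + δ • (1 - T) by module]
  exact (PosSemidef.one.smul (by linarith)).add (hT.2.smul hδ)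

theorem re_trace_mul_nonneg {E ρ : Matrix n n ℂ} (hE : IsTest E) (hρ : ρ.PosSemidef) :
    0 ≤ (E * ρ).trace.re :=
  (Complex.le_def.mp (hE.1.trace_mul_nonneg hρ)).1

theorem re_trace_mul_le_one {E ρ : Matrix n n ℂ} (hE : IsTest E) (hρ : IsDensityMatrix ρ) :
    (E * ρ).trace.re ≤ 1 := by
  have h := (Complex.le_def.mp (hE.2.trace_mul_nonneg hρ.1)).1
  rw [re_trace_one_sub_mul hρ.2] at h
  simpa using h

end IsTest

theorem Matrix.IsHermitian.exists_isTest_re_trace_mul_pos {D : Matrix n n ℂ}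
    (hD : D.IsHermitian) (htr : D.trace = 0) (hne : D ≠ 0) :
    ∃ T, IsTest T ∧ 0 < (T * D).trace.re := by
  have hsum : ∑ i, hD.eigenvalues i = 0 := by
    have h := hD.trace_eq_sum_eigenvalues
    rw [htr, ← RCLike.ofReal_sum] at h
    exact RCLike.ofReal_eq_zero.mp h.symm
  have hne' : ∃ i ∈ Finset.univ, hD.eigenvalues i ≠ 0 := by
    simpa [funext_iff] using mt hD.eigenvalues_eq_zero_iff.mp hne
  obtain ⟨i, -, hi⟩ := Finset.exists_pos_of_sum_zero_of_exists_nonzero _ hsum hne'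
  refine ⟨_, (isTest_diagonal_single i).unitary_conj hD.eigenvectorUnitary, ?_⟩
  have hdiag := hD.conjStarAlgAut_star_eigenvectorUnitary
  rw [Unitary.conjStarAlgAut_star_apply] at hdiag
  simpa [trace_unitary_conj_diagonal_mul, hdiag, Pi.single_apply] using hi

theorem exists_mem_typeIIErrors_lt_of_ne {ε : ℝ} (hε : ε ∈ Set.Ioo (0 : ℝ) 1)
    {ρ X : Matrix n n ℂ} (hρ : IsDensityMatrix ρ) (hX : X.IsHermitian) (hXtr : X.trace = 1)
    (hne : ρ ≠ X) : ∃ r ∈ typeIIErrors ε ρ X, r < 1 - ε := by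
  obtain ⟨hε0, hε1⟩ := hε
  obtain ⟨T, hT, hpos⟩ := (hρ.1.1.sub hX).exists_isTest_re_trace_mul_pos
    (by rw [trace_sub, hρ.2, hXtr, sub_self]) (sub_ne_zero.mpr hne)
  rw [Matrix.mul_sub, trace_sub, Complex.sub_re] at hpos
  set q := (T * ρ).trace.re with hq
  have hq0 : 0 ≤ q := hT.re_trace_mul_nonneg hρ.1
  have hq1 : q ≤ 1 := hT.re_trace_mul_le_one hρ
  -- `δ ≤ min ε (1 - ε)` keeps `(1 - ε - δ q) I + δ T` between `0` and `I`.
  set δ := ε * (1 - ε)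
  have hδ0 : 0 < δ := mul_pos hε0 (by linarith)
  have hδq : δ * q ≤ δ := mul_le_of_le_one_right hδ0.le hq1
  have hδq0 : 0 ≤ δ * q := mul_nonneg hδ0.le hq0
  have hδε : δ ≤ ε := by nlinarith
  have hδε' : δ ≤ 1 - ε := by nlinarith
  refine ⟨_, ⟨(1 - ε - δ * q) • 1 + δ • T,
    hT.smul_one_add_smul (by linarith) hδ0.le (by linarith), ?_, rfl⟩, ?_⟩
  · rw [re_trace_one_sub_mul hρ.2, re_trace_smul_one_add_smul_mul, hρ.2, ← hq, Complex.one_re]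
    linarith
  · rw [re_trace_smul_one_add_smul_mul, hXtr, Complex.one_re]
    linarith [mul_pos hδ0 hpos]

theorem sInf_typeIIErrors_lt_of_ne {ε : ℝ} (hε : ε ∈ Set.Ioo (0 : ℝ) 1)
    {ρ X : Matrix n n ℂ} (hρ : IsDensityMatrix ρ) (hX : X.IsHermitian) (hXtr : X.trace = 1)
    (hne : ρ ≠ X) : sInf (typeIIErrors ε ρ X) < 1 - ε := by
  obtain ⟨r, hr, hlt⟩ := exists_mem_typeIIErrors_lt_of_ne hε hρ hX hXtr hne
  by_cases hbdd : BddBelow (typeIIErrors ε ρ X)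
  · exact (csInf_le hbdd hr).trans_lt hlt
  · rw [Real.sInf_of_not_bddBelow hbdd]
    linarith [hε.2]

theorem isLeast_typeIIErrors_self {ε : ℝ} (hε0 : 0 ≤ ε) (hε1 : ε ≤ 1) {ρ : Matrix n n ℂ}
    (hρ : ρ.trace = 1) : IsLeast (typeIIErrors ε ρ ρ) (1 - ε) := by
  refine ⟨⟨(1 - ε) • 1, ⟨PosSemidef.one.smul (by linarith), ?_⟩, ?_, ?_⟩, ?_⟩
  · rw [show 1 - (1 - ε) • (1 : Matrix n n ℂ) = ε • 1 by module]
    exact PosSemidef.one.smul hε0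
  · simp [re_trace_one_sub_mul hρ, hρ]
  · simp [hρ]
  · rintro r ⟨E, -, hE, rfl⟩
    rw [re_trace_one_sub_mul hρ] at hE
    linarith

end

/-- faithfulness of the smoothed min-relative entropy (extended to
Hermitian trace-one second arguments). -/
theorem stmt_4 {d : ℕ} (ε : ℝ) (hε : ε ∈ Set.Ioo (0:ℝ) 1)
    (ρ X : Matrix (Fin d) (Fin d) ℂ)
    (hρ : IsDensityMatrix ρ) (hX : X.IsHermitian) (hXtr : X.trace = 1) :
    sInf {r : ℝ | ∃ E : Matrix (Fin d) (Fin d) ℂ, IsTest E ∧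
        ((1 - E) * ρ).trace.re ≤ ε ∧ r = (E * X).trace.re} = 1 - ε ↔
      ρ = X := by
  change sInf (typeIIErrors ε ρ X) = 1 - ε ↔ ρ = X
  refine ⟨fun h => ?_, ?_⟩
  · by_contra hne
    exact (sInf_typeIIErrors_lt_of_ne hε hρ hX hXtr hne).ne h
  · rintro rfl
    exact (isLeast_typeIIErrors_self hε.1.le hε.2.le hρ.2).csInf_eq
end

section
/- Let n ≥ 1 be an integer and δ > 0. Then the 2^n×2^n matrix |1⟩⟨1|^{⊗n} belongs to the affine hull of the set {π_M^{⊗n} : M ∈ [2, 2+δ]}; that is, there exist finitely many values M_0, …, M_k ∈ [2, 2+δ] and real coefficients a_0, …, a_k with Σ_i a_i = 1 such that |1⟩⟨1|^{⊗n} = Σ_i a_i · π_{M_i}^{⊗n}. -/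
/-!
The diagonal entries of `π_M^{⊗n}` are `t^c (1 - t)^(n - c)` with `t = 1 / M`, polynomials of
degree at most `n` in `t`, and `|1⟩⟨1|^{⊗n}` is the same expression at `t = 1` (formally `M = 1`).
Lagrange interpolation at `n + 1` distinct nodes `t_i = 1 / M_i` writes the value of every such
polynomial at `1` as the same combination `∑ aᵢ p(tᵢ)`, and taking `p = 1` shows `∑ aᵢ = 1`.
-/

open Matrix ComplexOrder

open Polynomial Finset

theorem Lagrange.eval_eq_sum_eval_basis_mul {ι F : Type*} [Field F] [DecidableEq ι]
    {s : Finset ι} {v : ι → F} (hvs : Set.InjOn v s) {f : F[X]} (hf : f.degree < #s) (z : F) :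
    f.eval z = ∑ i ∈ s, (Lagrange.basis s v i).eval z * f.eval (v i) := by
  conv_lhs => rw [Lagrange.eq_interpolate hvs hf]
  simp [Lagrange.interpolate_apply, eval_finsetSum, mul_comm]

/-- `π_M` with `1 / M` replaced by the variable `X`. -/
noncomputable def piMPoly : Matrix (Fin 2) (Fin 2) ℝ[X] :=
  diagonal ![1 - X, X]

theorem piM_apply (M : ℝ) (a b : Fin 2) : piM M a b = (((piMPoly a b).eval M⁻¹ : ℝ) : ℂ) := by
  fin_cases a <;> fin_cases b <;> simp [piM, piMPoly]

theorem natDegree_piMPoly_le (a b : Fin 2) : (piMPoly a b).natDegree ≤ 1 := by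
  fin_cases a <;> fin_cases b <;> simp [piMPoly, natDegree_sub_le_iff_left natDegree_X_le]

theorem tensPow_piM_apply (M : ℝ) {n : ℕ} (x y : Fin n → Fin 2) :
    tensPow (piM M) n x y = (((∏ j, piMPoly (x j) (y j)).eval M⁻¹ : ℝ) : ℂ) := by
  simp [tensPow, piM_apply, eval_prod]

theorem natDegree_prod_piMPoly_le {n : ℕ} (x y : Fin n → Fin 2) :
    (∏ j, piMPoly (x j) (y j)).natDegree ≤ n :=
  (natDegree_prod_le _ _).trans <| by
    simpa using sum_le_card_nsmul univ _ 1 fun j _ => natDegree_piMPoly_le (x j) (y j)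

theorem piM_one : piM 1 = ket1 := by
  ext a b; fin_cases a <;> fin_cases b <;> simp [piM, ket1]

section GibbsWeight

variable {ι : Type*} [Fintype ι] [DecidableEq ι] {Ms : ι → ℝ}

noncomputable def gibbsWeight (Ms : ι → ℝ) (M : ℝ) (i : ι) : ℝ :=
  (Lagrange.basis univ (fun j => (Ms j)⁻¹) i).eval M⁻¹

theorem sum_gibbsWeight [Nonempty ι] (hMs : Function.Injective Ms) (M : ℝ) :
    ∑ i, gibbsWeight Ms M i = 1 := by
  have hinj : Set.InjOn (fun j => (Ms j)⁻¹) (univ : Finset ι) := (inv_injective.comp hMs).injOn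
  simp only [gibbsWeight]
  rw [← eval_finsetSum, Lagrange.sum_basis hinj univ_nonempty, eval_one]

theorem tensPow_piM_eq_sum_gibbsWeight_smul {n : ℕ} (hn : n < Fintype.card ι)
    (hMs : Function.Injective Ms) (M : ℝ) :
    tensPow (piM M) n = ∑ i, gibbsWeight Ms M i • tensPow (piM (Ms i)) n := by
  ext x y
  have hinj : Set.InjOn (fun j => (Ms j)⁻¹) (univ : Finset ι) := (inv_injective.comp hMs).injOn
  have hdeg : (∏ j, piMPoly (x j) (y j)).degree < #(univ : Finset ι) :=
    (degree_le_of_natDegree_le (natDegree_prod_piMPoly_le x y)).trans_lt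
      (by rw [card_univ]; exact WithBot.coe_lt_coe.mpr hn)
  rw [Matrix.sum_apply, tensPow_piM_apply, Lagrange.eval_eq_sum_eval_basis_mul hinj hdeg]
  simp [gibbsWeight, tensPow_piM_apply, Complex.real_smul]

end GibbsWeight

theorem stmt_14_general (n : ℕ) (δ : ℝ) (hδ : 0 < δ) :
    ∃ (k : ℕ) (Ms : Fin (k + 1) → ℝ) (a : Fin (k + 1) → ℝ),
      (∀ i, Ms i ∈ Set.Icc (2:ℝ) (2 + δ)) ∧ (∑ i, a i) = 1 ∧
      tensPow ket1 n = ∑ i, a i • tensPow (piM (Ms i)) n := by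
  set Ms : Fin (n + 1) → ℝ := fun i => 2 + δ / (i + 1)
  have hMs : Function.Injective Ms := fun i j h => by
    have : (i : ℝ) + 1 = j + 1 := by
      simp only [Ms, add_right_inj] at h
      field_simp at h
      linarith
    exact Fin.ext (by exact_mod_cast add_right_cancel this)
  refine ⟨n, Ms, gibbsWeight Ms 1, fun i => ⟨?_, ?_⟩, sum_gibbsWeight hMs 1, ?_⟩
  · exact le_add_of_nonneg_right (by positivity)
  · exact add_le_add_right (div_le_self hδ.le (le_add_of_nonneg_left (Nat.cast_nonneg _))) 2
  · rw [← piM_one]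
    exact tensPow_piM_eq_sum_gibbsWeight_smul (by simp) hMs 1

/-- `|1⟩⟨1|^{⊗n}` lies in the affine hull of
`{π_M^{⊗n} : M ∈ [2, 2+δ]}`. -/
theorem stmt_14 (n : ℕ) (hn : 1 ≤ n) (δ : ℝ) (hδ : 0 < δ) :
    ∃ (k : ℕ) (Ms : Fin (k + 1) → ℝ) (a : Fin (k + 1) → ℝ),
      (∀ i, Ms i ∈ Set.Icc (2:ℝ) (2 + δ)) ∧ (∑ i, a i) = 1 ∧
      tensPow ket1 n = ∑ i, a i • tensPow (piM (Ms i)) n :=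
  stmt_14_general n δ hδ
end
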